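/- arXiv:1407.4235 — 2 statements merged into one kernel-verified Lean document; each statement's English description precedes it below -/
import Mathlib

section
/- Let H be a connected finite simple graph with two vertices s and t at distance d ≥ 2 such that every vertex of H lies in some layer L_0, L_1, …, L_d, and let (G, L) be the constructed list-coloring instance. Then for every proper L-coloring f of G, the sequence s, f(u_1), f(u_2), …, f(u_{d−1}), t is an S-path in H, i.e., a shortest path from s to t. -/
/-- The layer `L_i`: vertices at distance `i` from `s` and `d - i` from `t`. -/
def layerSet {V : Type*} (H : SimpleGraph V) (s t : V) (d i : ℕ) : Set V :=
  {v | H.dist s v = i ∧ H.dist t v = d - i}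

/-- The vertices of the constructed graph `G`: a layer vertex `u_i` for each
`1 ≤ i ≤ d - 1`, and a forbidden vertex `w_{a,b}` for each `1 ≤ i ≤ d - 2` and each pair
`a ∈ L_i`, `b ∈ L_{i+1}` with `ab ∉ E(H)`. -/
abbrev CVert {V : Type*} (H : SimpleGraph V) (s t : V) (d : ℕ) :=
  {i : ℕ // 1 ≤ i ∧ i ≤ d - 1} ⊕
    {x : ℕ × V × V // 1 ≤ x.1 ∧ x.1 ≤ d - 2 ∧
      x.2.1 ∈ layerSet H s t d x.1 ∧ x.2.2 ∈ layerSet H s t d (x.1 + 1) ∧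
      ¬ H.Adj x.2.1 x.2.2}

/-- Adjacency of the constructed graph: the forbidden vertex `w_{a,b}` for layers
`i, i+1` is joined exactly to the layer vertices `u_i` and `u_{i+1}`. -/
def CAdj {V : Type*} (H : SimpleGraph V) (s t : V) (d : ℕ) :
    CVert H s t d → CVert H s t d → Prop
  | Sum.inl u, Sum.inr w => u.1 = w.1.1 ∨ u.1 = w.1.1 + 1
  | Sum.inr w, Sum.inl u => u.1 = w.1.1 ∨ u.1 = w.1.1 + 1
  | _, _ => False

/-- The constructed graph `G`. -/
def CGraph {V : Type*} (H : SimpleGraph V) (s t : V) (d : ℕ) :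
    SimpleGraph (CVert H s t d) where
  Adj := CAdj H s t d
  symm := ⟨by rintro (u | w) (u' | w') h <;> simp [CAdj] at h ⊢ <;> exact h⟩
  loopless := ⟨by rintro (u | w) h <;> simp [CAdj] at h⟩

/-- The list assignment of the constructed instance: the layer vertex `u_i` has list
`L_i`, and the forbidden vertex `w_{a,b}` has list `{a, b}` (colors are vertices of
`H`). -/
def CList {V : Type*} (H : SimpleGraph V) (s t : V) (d : ℕ) :
    CVert H s t d → Set V
  | Sum.inl u => layerSet H s t d u.1
  | Sum.inr w => {w.1.2.1, w.1.2.2}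

/-- A proper `L`-coloring of `G`: each vertex gets a color from its list, and adjacent
vertices get different colors. -/
def IsProperListColoring {W β : Type*} (G : SimpleGraph W) (L : W → Set β)
    (f : W → β) : Prop :=
  (∀ v, f v ∈ L v) ∧ ∀ ⦃u w⦄, G.Adj u w → f u ≠ f w

/-
Consecutive layer vertices `u_i, u_{i+1}` receive colors `a ∈ L_i`, `b ∈ L_{i+1}`. If `ab` were
not an edge of `H`, the forbidden vertex `w_{a,b}` would exist; its color is `a` or `b`, and
it is adjacent to both `u_i` and `u_{i+1}`, so the coloring would not be proper. At the ends,
`f(u_1) ∈ L_1` is adjacent to `s` and `f(u_{d-1}) ∈ L_{d-1}` to `t` by the distance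
conditions. Hence `s, f(u_1), …, f(u_{d-1}), t` is a walk of length `d = dist s t`, hence a
shortest path.
-/

namespace SimpleGraph

theorem exists_walk_getVert_eq_of_forall_adj {V : Type*} {G : SimpleGraph V} (n : ℕ)
    (g : ℕ → V) (hg : ∀ i < n, G.Adj (g i) (g (i + 1))) :
    ∃ p : G.Walk (g 0) (g n), p.length = n ∧ ∀ i ≤ n, p.getVert i = g i := by
  induction n generalizing g with
  | zero => exact ⟨.nil, rfl, fun i hi => by simp [Nat.le_zero.mp hi]⟩
  | succ n ih =>
    obtain ⟨q, hq, hqg⟩ := ih (fun i => g (i + 1)) fun i hi => hg (i + 1) (by omega)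
    refine ⟨.cons (hg 0 n.succ_pos) q, by simp [hq], ?_⟩
    rintro (_ | i) hi
    · simp
    · rw [Walk.getVert_cons_succ]
      exact hqg i (by omega)

end SimpleGraph

section ColoringYieldsSPath

variable {V : Type*} {H : SimpleGraph V} {s t : V} {d : ℕ}

theorem adj_of_mem_layerSet_one {b : V} (hb : b ∈ layerSet H s t d 1) : H.Adj s b :=
  SimpleGraph.dist_eq_one_iff_adj.mp hb.1

theorem adj_of_mem_layerSet_pred (hd : 1 ≤ d) {a : V} (ha : a ∈ layerSet H s t d (d - 1)) :
    H.Adj a t :=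
  (SimpleGraph.dist_eq_one_iff_adj.mp (by rw [ha.2]; omega)).symm

theorem IsProperListColoring.inl_mem_layerSet {f : CVert H s t d → V}
    (hf : IsProperListColoring (CGraph H s t d) (CList H s t d) f)
    (u : {i : ℕ // 1 ≤ i ∧ i ≤ d - 1}) : f (.inl u) ∈ layerSet H s t d u.1 :=
  hf.1 (.inl u)

theorem IsProperListColoring.adj_of_succ {f : CVert H s t d → V}
    (hf : IsProperListColoring (CGraph H s t d) (CList H s t d) f)
    (u v : {i : ℕ // 1 ≤ i ∧ i ≤ d - 1}) (huv : v.1 = u.1 + 1) :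
    H.Adj (f (.inl u)) (f (.inl v)) := by
  obtain ⟨j, hj⟩ := v
  subst huv
  by_contra hnadj
  let w : CVert H s t d :=
    .inr ⟨(u.1, f (.inl u), f (.inl ⟨_, hj⟩)), u.2.1, by omega,
      hf.inl_mem_layerSet u, hf.inl_mem_layerSet ⟨_, hj⟩, hnadj⟩
  have hu : (CGraph H s t d).Adj (.inl u) w := Or.inl rfl
  have hv : (CGraph H s t d).Adj (.inl ⟨_, hj⟩) w := Or.inr rfl
  rcases hf.1 w with hw | hw
  · exact hf.2 hu hw.symm
  · exact hf.2 hv hw.symm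

variable (H s t d) in
def colorSeq (f : CVert H s t d → V) (i : ℕ) : V :=
  if h : 1 ≤ i ∧ i ≤ d - 1 then f (.inl ⟨i, h⟩) else if i = 0 then s else t

variable {f : CVert H s t d → V}

theorem colorSeq_zero : colorSeq H s t d f 0 = s := by
  simp [colorSeq]

theorem colorSeq_self (hd : 1 ≤ d) : colorSeq H s t d f d = t := by
  rw [colorSeq, dif_neg (by omega), if_neg (by omega)]

theorem colorSeq_of_mem (u : {i : ℕ // 1 ≤ i ∧ i ≤ d - 1}) :
    colorSeq H s t d f u.1 = f (.inl u) := by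
  rw [colorSeq, dif_pos u.2]

theorem colorSeq_adj_succ (hd2 : 2 ≤ d)
    (hf : IsProperListColoring (CGraph H s t d) (CList H s t d) f) :
    ∀ i < d, H.Adj (colorSeq H s t d f i) (colorSeq H s t d f (i + 1)) := by
  intro i hi
  rcases Nat.eq_zero_or_pos i with rfl | hi1
  · rw [colorSeq_zero, colorSeq_of_mem ⟨1, le_rfl, by omega⟩]
    exact adj_of_mem_layerSet_one (hf.inl_mem_layerSet _)
  by_cases hlast : i + 1 = d
  · rw [hlast, colorSeq_self (by omega), show i = d - 1 by omega,
      colorSeq_of_mem ⟨d - 1, by omega, le_rfl⟩]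
    exact adj_of_mem_layerSet_pred (by omega) (hf.inl_mem_layerSet ⟨d - 1, _⟩)
  · rw [colorSeq_of_mem ⟨i, hi1, by omega⟩, colorSeq_of_mem ⟨i + 1, by omega, by omega⟩]
    exact hf.adj_of_succ _ _ rfl

end ColoringYieldsSPath

theorem coloring_yields_sPath_general {V : Type*}
    (H : SimpleGraph V) (s t : V) (d : ℕ)
    (hd : H.dist s t = d) (hd2 : 2 ≤ d)
    (f : CVert H s t d → V)
    (hf : IsProperListColoring (CGraph H s t d) (CList H s t d) f) :
    ∃ p : H.Walk s t, p.IsPath ∧ p.length = d ∧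
      ∀ u : {i : ℕ // 1 ≤ i ∧ i ≤ d - 1}, p.getVert u.1 = f (Sum.inl u) := by
  obtain ⟨p, hlen, hp⟩ :=
    SimpleGraph.exists_walk_getVert_eq_of_forall_adj d _ (colorSeq_adj_succ hd2 hf)
  let q := p.copy colorSeq_zero (colorSeq_self (by omega))
  refine ⟨q, q.isPath_of_length_eq_dist (by simp [q, hlen, hd]), by simp [q, hlen], ?_⟩
  intro u
  rw [SimpleGraph.Walk.getVert_copy, hp u.1 (by omega), colorSeq_of_mem]

/-- Every proper list coloring `f` of the constructed instance `(G, L)` yields an S-path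
in `H`: the sequence `s, f(u_1), …, f(u_{d-1}), t` is a shortest path from `s` to `t`. -/
theorem coloring_yields_sPath {V : Type*} [Fintype V] [DecidableEq V]
    (H : SimpleGraph V) (hconn : H.Connected) (s t : V) (d : ℕ)
    (hd : H.dist s t = d) (hd2 : 2 ≤ d)
    (hlayers : ∀ v : V, ∃ i ≤ d, v ∈ layerSet H s t d i)
    (f : CVert H s t d → V)
    (hf : IsProperListColoring (CGraph H s t d) (CList H s t d) f) :
    ∃ p : H.Walk s t, p.IsPath ∧ p.length = d ∧
      ∀ u : {i : ℕ // 1 ≤ i ∧ i ≤ d - 1}, p.getVert u.1 = f (Sum.inl u) :=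
  coloring_yields_sPath_general H s t d hd hd2 f hf
end

section
/- Let H be a connected finite simple graph with two vertices s and t at distance d ≥ 2 such that every vertex of H lies in some layer L_0, L_1, …, L_d, and let (G, L) be the constructed list-coloring instance. Then for every S-path P in H there exists a proper L-coloring f of G such that, for each 1 ≤ i ≤ d−1, f(u_i) equals the unique vertex of P in layer L_i. -/
/-- An S-path: a shortest path between `s` and `t`, i.e. a path with exactly
`dist s t` edges. -/
def IsSPath {V : Type*} (H : SimpleGraph V) {s t : V} (p : H.Walk s t) : Prop :=
  p.IsPath ∧ p.length = H.dist s t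

/-
The layer vertices are colored along `P`, `u_i ↦ P_i`. A forbidden vertex `w_{a,b}` between
layers `i` and `i + 1` can only clash with `P_i` or `P_{i+1}`; distinct layers are disjoint, so
`a` can only clash with `P_i` and `b` only with `P_{i+1}`, and both clashes at once would make
`ab = P_i P_{i+1}` an edge of `H`. So `w_{a,b}` gets `b` if `a = P_i` and `a` otherwise.
-/

lemma ne_of_mem_layerSet {V : Type*} {H : SimpleGraph V} {s t x y : V} {d i j : ℕ}
    (hx : x ∈ layerSet H s t d i) (hy : y ∈ layerSet H s t d j) (hij : i ≠ j) : x ≠ y := by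
  rintro rfl
  exact hij (hx.1.symm.trans hy.1)

lemma SimpleGraph.Walk.getVert_mem_layerSet {V : Type*} {H : SimpleGraph V} {s t : V}
    (p : H.Walk s t) (hp : p.length = H.dist s t) {n : ℕ} (hn : n ≤ H.dist s t) :
    p.getVert n ∈ layerSet H s t (H.dist s t) n := by
  have hs : H.dist s (p.getVert n) ≤ n := (H.dist_le (p.take n)).trans (by simp)
  have ht : H.dist (p.getVert n) t ≤ H.dist s t - n := by simpa [hp] using H.dist_le (p.drop n)
  have htri := (p.take n).reachable.dist_triangle_left t
  refine ⟨by omega, ?_⟩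
  rw [SimpleGraph.dist_comm]
  omega

section PathColoring

variable {V : Type*} [DecidableEq V] (H : SimpleGraph V) (s t : V) (d : ℕ)

def pathColoring (c : ℕ → V) : CVert H s t d → V
  | Sum.inl u => c u.1
  | Sum.inr w => if w.1.2.1 = c w.1.1 then w.1.2.2 else w.1.2.1

variable {H s t d} {c : ℕ → V}
  (hc : ∀ i, 1 ≤ i → i ≤ d - 1 → c i ∈ layerSet H s t d i)
  (hadj : ∀ i, 1 ≤ i → i ≤ d - 2 → H.Adj (c i) (c (i + 1)))
include hc hadj

lemma pathColoring_inr_ne (w) {j : ℕ} (hj : j = w.1.1 ∨ j = w.1.1 + 1) :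
    pathColoring H s t d c (Sum.inr w) ≠ c j := by
  obtain ⟨⟨i, a, b⟩, hi1, hi2, ha, hb, hab⟩ := w
  have hci := hc i hi1 (by omega)
  have hci' := hc (i + 1) (by omega) (by omega)
  dsimp only at hi1 hi2 ha hb hab hj ⊢
  simp only [pathColoring]
  split_ifs with hai
  · rcases hj with rfl | rfl
    · exact ne_of_mem_layerSet hb hci (by omega)
    · intro hbc
      exact hab (hai ▸ hbc ▸ hadj i hi1 hi2)
  · rcases hj with rfl | rfl
    · exact hai
    · exact ne_of_mem_layerSet ha hci' (by omega)

lemma isProperListColoring_pathColoring :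
    IsProperListColoring (CGraph H s t d) (CList H s t d) (pathColoring H s t d c) := by
  refine ⟨?_, ?_⟩
  · rintro (u | w)
    · exact hc u.1 u.2.1 u.2.2
    · simp only [CList, pathColoring]
      split_ifs <;> simp
  · rintro (u | w) (u' | w') h
    · exact h.elim
    · exact (pathColoring_inr_ne hc hadj w' h).symm
    · exact pathColoring_inr_ne hc hadj w h
    · exact h.elim

end PathColoring

theorem sPath_yields_coloring_general {V : Type*} [DecidableEq V]
    (H : SimpleGraph V) (s t : V) (d : ℕ)
    (hd : H.dist s t = d)
    (P : H.Walk s t) (hP : IsSPath H P) :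
    ∃ f : CVert H s t d → V,
      IsProperListColoring (CGraph H s t d) (CList H s t d) f ∧
      ∀ u : {i : ℕ // 1 ≤ i ∧ i ≤ d - 1},
        f (Sum.inl u) ∈ P.support ∧ f (Sum.inl u) ∈ layerSet H s t d u.1 := by
  subst hd
  have hlayer : ∀ i ≤ H.dist s t, P.getVert i ∈ layerSet H s t (H.dist s t) i :=
    fun i hi => P.getVert_mem_layerSet hP.2 hi
  have hadj : ∀ i, i < H.dist s t → H.Adj (P.getVert i) (P.getVert (i + 1)) :=
    fun i hi => P.adj_getVert_succ (hP.2 ▸ hi)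
  refine ⟨pathColoring H s t _ P.getVert,
    isProperListColoring_pathColoring (fun i _ hi => hlayer i (by omega))
      (fun i _ hi => hadj i (by omega)),
    fun u => ⟨P.getVert_mem_support u.1, hlayer u.1 (by omega)⟩⟩

/-- Every S-path `P` in `H` yields a proper list coloring `f` of the constructed
instance `(G, L)` in which each layer vertex `u_i` is colored by the unique vertex of
`P` lying in layer `L_i`. -/
theorem sPath_yields_coloring {V : Type*} [Fintype V] [DecidableEq V]
    (H : SimpleGraph V) (hconn : H.Connected) (s t : V) (d : ℕ)
    (hd : H.dist s t = d) (hd2 : 2 ≤ d)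
    (hlayers : ∀ v : V, ∃ i ≤ d, v ∈ layerSet H s t d i)
    (P : H.Walk s t) (hP : IsSPath H P) :
    ∃ f : CVert H s t d → V,
      IsProperListColoring (CGraph H s t d) (CList H s t d) f ∧
      ∀ u : {i : ℕ // 1 ≤ i ∧ i ≤ d - 1},
        f (Sum.inl u) ∈ P.support ∧ f (Sum.inl u) ∈ layerSet H s t d u.1 :=
  sPath_yields_coloring_general H s t d hd P hP
end
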